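/- arXiv:1612.07050 — 3 statements merged into one kernel-verified Lean document; each statement's English description precedes it below -/
import Mathlib

section
/- For every permutation σ of {1,…,n+2} and all distinct i, j ∈ {1,…,n+2}: ∂_{i_j}(∂_jσ) = ∂_{j_i}(∂_iσ) as permutations of {1,…,n}. -/
/-- Insertion map `k ↦ k^i` : equals `k` if `k < i`, and `k + 1` if `k ≥ i`. -/
def ins (i k : ℕ) : ℕ := if k < i then k else k + 1

/-- Deletion map `k ↦ k_i` (intended for `k ≠ i`) : equals `k` if `k < i`,
and `k - 1` if `k > i`. -/
def del (i k : ℕ) : ℕ := if k < i then k else k - 1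

/-- A permutation of `{1, …, n}`, encoded as a permutation of `ℕ` fixing every
point outside `{1, …, n}`. -/
def IsPermOn (n : ℕ) (σ : Equiv.Perm ℕ) : Prop :=
  ∀ k : ℕ, k ∉ Finset.Icc 1 n → σ k = k

/-- `τ` is the deleted permutation `∂_i σ` : here `σ` is a permutation of
`{1,…,n+1}` and `τ` is the permutation of `{1,…,n}` defined by
`τ k = (σ (k^i))_{σ i}` for `k ∈ {1,…,n}`. -/
def IsDeleted (n : ℕ) (σ : Equiv.Perm ℕ) (i : ℕ) (τ : Equiv.Perm ℕ) : Prop :=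
  IsPermOn n τ ∧ ∀ k ∈ Finset.Icc 1 n, τ k = del (σ i) (σ (ins i k))

/-- for a permutation `σ` of `{1,…,n+2}` and distinct
`i, j ∈ {1,…,n+2}`, one has `∂_{i_j}(∂_j σ) = ∂_{j_i}(∂_i σ)` as permutations
of `{1,…,n}`. -/
theorem stmt7 (n : ℕ) (σ : Equiv.Perm ℕ) (hσ : IsPermOn (n + 2) σ)
    (i j : ℕ) (hi : i ∈ Finset.Icc 1 (n + 2)) (hj : j ∈ Finset.Icc 1 (n + 2))
    (hij : i ≠ j)
    (ρi ρj μ ν : Equiv.Perm ℕ)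
    (hρi : IsDeleted (n + 1) σ i ρi) (hρj : IsDeleted (n + 1) σ j ρj)
    (hμ : IsDeleted n ρj (del j i) μ) (hν : IsDeleted n ρi (del i j) ν) :
    μ = ν := by
  have ins_ne : ∀ a k : ℕ, ins a k ≠ a := by
    intro a k; simp only [ins]; split <;> omega
  have ins_del : ∀ a b : ℕ, a ≠ b → ins b (del b a) = a := by
    intro a b h; simp only [ins, del]; split_ifs <;> omega
  have ins_ins : ∀ k : ℕ, ins j (ins (del j i) k) = ins i (ins (del i j) k) := by
    intro k; simp only [ins, del]; split_ifs <;> omega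
  have del_del : ∀ a b c : ℕ, a ≠ b → a ≠ c → b ≠ c →
      del (del a b) (del a c) = del (del b a) (del b c) := by
    intro a b c h1 h2 h3; simp only [del]; split_ifs <;> omega
  simp only [Finset.mem_Icc] at hi hj
  apply Equiv.ext
  intro k
  by_cases hk : k ∈ Finset.Icc 1 n
  · rw [hμ.2 k hk, hν.2 k hk]
    simp only [Finset.mem_Icc] at hk
    have m1 : del j i ∈ Finset.Icc 1 (n + 1) := by
      simp only [Finset.mem_Icc, del]; split <;> omega
    have m2 : ins (del j i) k ∈ Finset.Icc 1 (n + 1) := by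
      simp only [Finset.mem_Icc, ins, del] at m1 ⊢; split_ifs <;> omega
    have m3 : del i j ∈ Finset.Icc 1 (n + 1) := by
      simp only [Finset.mem_Icc, del]; split <;> omega
    have m4 : ins (del i j) k ∈ Finset.Icc 1 (n + 1) := by
      simp only [Finset.mem_Icc, ins, del] at m3 ⊢; split_ifs <;> omega
    rw [hρj.2 _ m1, hρj.2 _ m2, hρi.2 _ m3, hρi.2 _ m4]
    rw [ins_del i j hij, ins_del j i hij.symm, ins_ins k]
    set m := ins i (ins (del i j) k) with hm
    have hmi : m ≠ i := ins_ne i _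
    have hmj : m ≠ j := by rw [hm, ← ins_ins k]; exact ins_ne j _
    exact del_del (σ j) (σ i) (σ m)
      (fun h => hij.symm (σ.injective h))
      (fun h => hmj (σ.injective h).symm)
      (fun h => hmi (σ.injective h).symm)
  · rw [hμ.1 k hk, hν.1 k hk]
end

section
/- Let n ≥ 2. For every word u over the alphabet {T_1,…,T_{n−1}} and every i ∈ {1,…,n}, the word ∂_i(u) over {T_1,…,T_{n−2}} evaluates in S_{n−1} to the deleted permutation ∂_i(ū) of the evaluation ū ∈ S_n of u; equivalently, for all k ∈ {1,…,n−1}, the image of k under the evaluation of ∂_i(u) equals ((k^i)·ū)_{i·ū}, where j·σ denotes the image of j under σ. -/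
/-- Evaluation of a word over the alphabet `{T_1, …}` (a letter `j` stands
for the adjacent transposition `τ_j = (j, j+1)`), acting on the right: the
first letter of the word acts first, so `k · (T_j :: w) = (k · T_j) · w`. -/
def wordEval : List ℕ → Equiv.Perm ℕ
  | [] => 1
  | j :: w => wordEval w * Equiv.swap j (j + 1)

/-- Word-level deletion `∂_i` : `∂_i(ε) = ε`; `∂_i(T_j · w) = ∂_{τ_j(i)}(w)`
if `i ∈ {j, j+1}`; and `∂_i(T_j · w) = T_{j_i} · ∂_i(w)` otherwise (in that
case `τ_j(i) = i`). -/
def wdel : ℕ → List ℕ → List ℕ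
  | _, [] => []
  | i, j :: w =>
      if i = j ∨ i = j + 1 then wdel (Equiv.swap j (j + 1) i) w
      else del i j :: wdel i w

/-!
Induction on the word. A letter `T_j` with `i ∈ {j, j+1}` is absorbed by the insertion:
`τ_j (k^i) = k^{τ_j(i)}`. Any other letter commutes with insertion after being relabelled:
`(τ_{j_i} k)^i = τ_j (k^i)`, while `τ_j` fixes `i`. The deletion index is kept in the range
`{1, …, n}`, which keeps the relabelled letters `j_i` in `{1, …, n - 2}`.
-/

theorem del_ins (i k : ℕ) : del i (ins i k) = k := by
  simp only [ins, del]
  split_ifs <;> omega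

theorem swap_ins_of_eq_or_eq {i j : ℕ} (h : i = j ∨ i = j + 1) (k : ℕ) :
    Equiv.swap j (j + 1) (ins i k) = ins (Equiv.swap j (j + 1) i) k := by
  simp only [ins, Equiv.swap_apply_def]
  split_ifs <;> omega

theorem ins_swap_del {i j : ℕ} (h : ¬(i = j ∨ i = j + 1)) (k : ℕ) :
    ins i (Equiv.swap (del i j) (del i j + 1) k) = Equiv.swap j (j + 1) (ins i k) := by
  simp only [ins, del, Equiv.swap_apply_def]
  split_ifs <;> omega

theorem wordEval_cons_apply (j : ℕ) (w : List ℕ) (k : ℕ) :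
    wordEval (j :: w) k = wordEval w (Equiv.swap j (j + 1) k) := rfl

theorem wdel_cons_of_eq_or_eq {i j : ℕ} (h : i = j ∨ i = j + 1) (w : List ℕ) :
    wdel i (j :: w) = wdel (Equiv.swap j (j + 1) i) w := by
  rw [wdel, if_pos h]

theorem wdel_cons_of_not_eq_or_eq {i j : ℕ} (h : ¬(i = j ∨ i = j + 1)) (w : List ℕ) :
    wdel i (j :: w) = del i j :: wdel i w := by
  rw [wdel, if_neg h]

theorem wordEval_wdel_apply (i : ℕ) (u : List ℕ) (k : ℕ) :
    wordEval (wdel i u) k = del (wordEval u i) (wordEval u (ins i k)) := by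
  induction u generalizing i k with
  | nil => exact (del_ins i k).symm
  | cons j w ih =>
    by_cases h : i = j ∨ i = j + 1
    · rw [wdel_cons_of_eq_or_eq h, ih, wordEval_cons_apply, wordEval_cons_apply,
        swap_ins_of_eq_or_eq h]
    · have hfix : Equiv.swap j (j + 1) i = i :=
        Equiv.swap_apply_of_ne_of_ne (by tauto) (by tauto)
      rw [wdel_cons_of_not_eq_or_eq h, wordEval_cons_apply, ih, ins_swap_del h,
        wordEval_cons_apply, wordEval_cons_apply, hfix]

theorem swap_mem_Icc {i j n : ℕ} (hj : j ∈ Finset.Icc 1 (n - 1)) (hi : i ∈ Finset.Icc 1 n) :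
    Equiv.swap j (j + 1) i ∈ Finset.Icc 1 n := by
  simp only [Finset.mem_Icc, Equiv.swap_apply_def] at *
  split_ifs <;> omega

theorem del_mem_Icc {i j n : ℕ} (hj : j ∈ Finset.Icc 1 (n - 1)) (hi : i ∈ Finset.Icc 1 n)
    (h : ¬(i = j ∨ i = j + 1)) : del i j ∈ Finset.Icc 1 (n - 2) := by
  simp only [Finset.mem_Icc, del] at *
  split_ifs <;> omega

theorem wdel_mem_Icc {n : ℕ} {u : List ℕ} (hu : ∀ j ∈ u, j ∈ Finset.Icc 1 (n - 1)) {i : ℕ}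
    (hi : i ∈ Finset.Icc 1 n) : ∀ j ∈ wdel i u, j ∈ Finset.Icc 1 (n - 2) := by
  induction u generalizing i with
  | nil => simp [wdel]
  | cons j w ih =>
    have hj := hu j List.mem_cons_self
    have hw : ∀ x ∈ w, x ∈ Finset.Icc 1 (n - 1) := fun x hx => hu x (List.mem_cons_of_mem j hx)
    by_cases h : i = j ∨ i = j + 1
    · rw [wdel_cons_of_eq_or_eq h]
      exact ih hw (swap_mem_Icc hj hi)
    · rw [wdel_cons_of_not_eq_or_eq h]
      exact List.forall_mem_cons.mpr ⟨del_mem_Icc hj hi h, ih hw hi⟩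

theorem stmt10_general (n : ℕ) (u : List ℕ)
    (hu : ∀ j ∈ u, j ∈ Finset.Icc 1 (n - 1))
    (i : ℕ) (hi : i ∈ Finset.Icc 1 n) :
    (∀ j ∈ wdel i u, j ∈ Finset.Icc 1 (n - 2)) ∧
    (∀ k ∈ Finset.Icc 1 (n - 1),
      wordEval (wdel i u) k = del (wordEval u i) (wordEval u (ins i k))) :=
  ⟨wdel_mem_Icc hu hi, fun k _ => wordEval_wdel_apply i u k⟩

/-- for `n ≥ 2`, a word `u` over `{T_1,…,T_{n-1}}` and
`i ∈ {1,…,n}`, the word `∂_i(u)` is a word over `{T_1,…,T_{n-2}}` and it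
evaluates in `S_{n-1}` to the deleted permutation `∂_i(ū)`, i.e. for all
`k ∈ {1,…,n-1}`, the image of `k` under the evaluation of `∂_i(u)` equals
`((k^i)·ū)_{i·ū}`. -/
theorem stmt10 (n : ℕ) (hn : 2 ≤ n) (u : List ℕ)
    (hu : ∀ j ∈ u, j ∈ Finset.Icc 1 (n - 1))
    (i : ℕ) (hi : i ∈ Finset.Icc 1 n) :
    (∀ j ∈ wdel i u, j ∈ Finset.Icc 1 (n - 2)) ∧
    (∀ k ∈ Finset.Icc 1 (n - 1),
      wordEval (wdel i u) k = del (wordEval u i) (wordEval u (ins i k))) :=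
  stmt10_general n u hu i hi
end

section
/- Let n ≥ 1 and let σ be a permutation of {1,…,n}. If u and v are two words over the alphabet {T_1,…,T_{n−1}} that both evaluate to σ and both have minimal length among all words evaluating to σ, then u ≡ v, where ≡ is the smallest congruence on words (i.e., the smallest equivalence relation compatible with concatenation on both sides) containing the braid relations T_i T_{i+1} T_i ≡ T_{i+1} T_i T_{i+1} for 1 ≤ i ≤ n−2 and the commutation relations T_i T_j ≡ T_j T_i for |i − j| ≥ 2. -/
/-- The smallest congruence on words over `{T_1,…,T_{n-1}}` (i.e. the smallest
equivalence relation compatible with concatenation on both sides) containing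
the braid relations `T_i T_{i+1} T_i ≡ T_{i+1} T_i T_{i+1}` for `1 ≤ i ≤ n-2`
and the commutation relations `T_i T_j ≡ T_j T_i` for `|i - j| ≥ 2`. -/
inductive BraidCongr (n : ℕ) : List ℕ → List ℕ → Prop where
  | braid (i : ℕ) (h1 : 1 ≤ i) (h2 : i ≤ n - 2) :
      BraidCongr n [i, i + 1, i] [i + 1, i, i + 1]
  | comm (i j : ℕ) (hi : i ∈ Finset.Icc 1 (n - 1)) (hj : j ∈ Finset.Icc 1 (n - 1))
      (h : i + 2 ≤ j ∨ j + 2 ≤ i) : BraidCongr n [i, j] [j, i]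
  | refl (u : List ℕ) : BraidCongr n u u
  | symm {u v : List ℕ} : BraidCongr n u v → BraidCongr n v u
  | trans {u v w : List ℕ} : BraidCongr n u v → BraidCongr n v w → BraidCongr n u w
  | append {u v w x : List ℕ} :
      BraidCongr n u v → BraidCongr n w x → BraidCongr n (u ++ w) (v ++ x)

/-!
The inversion number `invNum n σ` of a permutation of `{1,…,n}` changes by exactly one under
right multiplication by an adjacent transposition `τ_j`, and drops exactly when `j` is a descent,
`σ (j + 1) < σ j`. Hence `invNum n σ` is the length of the shortest words for `σ`, and a reduced
word for `σ` can begin with `j` only if `j` is a descent of `σ`.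

Matsumoto's argument then runs by induction on the length. If reduced words `a :: u` and `b :: v`
for `σ` begin with different letters, then `a` and `b` are both descents of `σ`, so `σ` has
reduced words `a b a w` and `b a b w` (when `|a - b| = 1`) or `a b w` and `b a w` (otherwise).
These are related by one braid or commutation relation, and the induction hypothesis, applied to
the tails, relates them to `a :: u` and `b :: v` respectively.
-/

open Equiv

def IsWord (n : ℕ) (w : List ℕ) : Prop := ∀ j ∈ w, j ∈ Finset.Icc 1 (n - 1)

lemma wordEval_append (u w : List ℕ) : wordEval (u ++ w) = wordEval w * wordEval u := by
  induction u with
  | nil => simp [wordEval]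
  | cons a u ih => simp [wordEval, ih, mul_assoc]

def permsOfIcc (n : ℕ) : Subgroup (Perm ℕ) :=
  fixingSubgroup (Perm ℕ) (Finset.Icc 1 n : Set ℕ)ᶜ

lemma mem_permsOfIcc {n : ℕ} {σ : Perm ℕ} :
    σ ∈ permsOfIcc n ↔ ∀ x ∉ Finset.Icc 1 n, σ x = x := by
  simp [permsOfIcc, mem_fixingSubgroup_iff, Perm.smul_def]

lemma swap_mem_permsOfIcc {n j : ℕ} (hj : j ∈ Finset.Icc 1 (n - 1)) :
    swap j (j + 1) ∈ permsOfIcc n := by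
  rw [mem_permsOfIcc]
  intro x hx
  simp only [Finset.mem_Icc] at hj hx
  exact swap_apply_of_ne_of_ne (by omega) (by omega)

lemma wordEval_mem_permsOfIcc {n : ℕ} {w : List ℕ} (hw : IsWord n w) :
    wordEval w ∈ permsOfIcc n := by
  induction w with
  | nil => exact one_mem _
  | cons a w ih =>
    exact mul_mem (ih fun j hj => hw j (List.mem_cons_of_mem a hj))
      (swap_mem_permsOfIcc (hw a List.mem_cons_self))

lemma apply_mem_Icc_of_mem_permsOfIcc {n : ℕ} {σ : Perm ℕ} (hσ : σ ∈ permsOfIcc n) {x : ℕ}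
    (hx : x ∈ Finset.Icc 1 n) : σ x ∈ Finset.Icc 1 n := by
  by_contra h
  exact h ((σ.injective (mem_permsOfIcc.1 hσ _ h)).symm ▸ hx)

def inversions (n : ℕ) (σ : Perm ℕ) : Finset (ℕ × ℕ) :=
  (Finset.Icc 1 n ×ˢ Finset.Icc 1 n).filter fun p => p.1 < p.2 ∧ σ p.2 < σ p.1

def invNum (n : ℕ) (σ : Perm ℕ) : ℕ := (inversions n σ).card

lemma mem_inversions {n : ℕ} {σ : Perm ℕ} {x y : ℕ} :
    (x, y) ∈ inversions n σ ↔ x ∈ Finset.Icc 1 n ∧ y ∈ Finset.Icc 1 n ∧ x < y ∧ σ y < σ x := by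
  simp [inversions, and_assoc]

lemma invNum_one (n : ℕ) : invNum n 1 = 0 := by
  rw [invNum, Finset.card_eq_zero, Finset.eq_empty_iff_forall_notMem]
  rintro ⟨x, y⟩
  simp only [mem_inversions, Perm.one_apply]
  omega

lemma erase_inversions_mul_swap {n j : ℕ} (hj : j ∈ Finset.Icc 1 (n - 1)) (σ : Perm ℕ) :
    (inversions n (σ * swap j (j + 1))).erase (j, j + 1) =
      ((inversions n σ).erase (j, j + 1)).map
        (prodCongr (swap j (j + 1)) (swap j (j + 1))).toEmbedding := by
  ext ⟨x, y⟩
  simp only [Finset.mem_map_equiv, prodCongr_symm, symm_swap, prodCongr_apply, Prod.map,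
    Finset.mem_erase, mem_inversions, Finset.mem_Icc, Perm.mul_apply, ne_eq, Prod.mk.injEq,
    swap_apply_def]
  simp only [Finset.mem_Icc] at hj
  split_ifs <;> subst_vars <;> omega

lemma invNum_mul_swap_add_one {n j : ℕ} (hj : j ∈ Finset.Icc 1 (n - 1)) {σ : Perm ℕ}
    (h : σ (j + 1) < σ j) : invNum n (σ * swap j (j + 1)) + 1 = invNum n σ := by
  have hmem : (j, j + 1) ∈ inversions n σ := by
    simp only [Finset.mem_Icc] at hj
    simp only [mem_inversions, Finset.mem_Icc]
    omega
  have hnmem : (j, j + 1) ∉ inversions n (σ * swap j (j + 1)) := by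
    simp only [mem_inversions, Perm.mul_apply, swap_apply_left, swap_apply_right]
    omega
  rw [invNum, invNum, ← Finset.card_erase_add_one hmem, ← Finset.erase_eq_of_notMem hnmem,
    erase_inversions_mul_swap hj, Finset.card_map]

lemma invNum_mul_swap_of_lt {n j : ℕ} (hj : j ∈ Finset.Icc 1 (n - 1)) {σ : Perm ℕ}
    (h : σ j < σ (j + 1)) : invNum n (σ * swap j (j + 1)) = invNum n σ + 1 := by
  have := invNum_mul_swap_add_one hj (σ := σ * swap j (j + 1)) (by simpa using h)
  rwa [mul_swap_mul_self, eq_comm] at this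

lemma invNum_wordEval_le_length {n : ℕ} {w : List ℕ} (hw : IsWord n w) :
    invNum n (wordEval w) ≤ w.length := by
  induction w with
  | nil => simp [wordEval, invNum_one]
  | cons a w ih =>
    have ha := hw a List.mem_cons_self
    have ih := ih fun j hj => hw j (List.mem_cons_of_mem a hj)
    simp only [wordEval, List.length_cons]
    rcases lt_or_gt_of_ne ((wordEval w).injective.ne (Nat.succ_ne_self a).symm) with h | h
    · rw [invNum_mul_swap_of_lt ha h]; omega
    · have := invNum_mul_swap_add_one ha h; omega

lemma eq_one_of_forall_lt_succ {n : ℕ} {σ : Perm ℕ} (hσ : σ ∈ permsOfIcc n)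
    (h : ∀ j ∈ Finset.Icc 1 (n - 1), σ j < σ (j + 1)) : σ = 1 := by
  have hfix := mem_permsOfIcc.1 hσ
  have hmono : StrictMono σ := by
    refine strictMono_nat_of_lt_succ fun j => ?_
    by_cases hj : j ∈ Finset.Icc 1 (n - 1)
    · exact h j hj
    rw [Finset.mem_Icc] at hj
    rcases Nat.eq_zero_or_pos j with rfl | hj0
    · have h0 : σ 0 = 0 := hfix 0 (by simp)
      rw [h0]
      exact Nat.pos_of_ne_zero fun h1 => by simpa using σ.injective (h1.trans h0.symm)
    · rw [hfix (j + 1) (by simp; omega)]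
      by_cases hjn : j ∈ Finset.Icc 1 n
      · have := Finset.mem_Icc.1 (apply_mem_Icc_of_mem_permsOfIcc hσ hjn); omega
      · rw [hfix j hjn]; omega
  ext x
  exact congrFun ((hmono.range_inj strictMono_id).1 (by simp)) x

lemma exists_descent {n : ℕ} {σ : Perm ℕ} (hσ : σ ∈ permsOfIcc n) (h1 : σ ≠ 1) :
    ∃ j ∈ Finset.Icc 1 (n - 1), σ (j + 1) < σ j := by
  contrapose! h1
  refine eq_one_of_forall_lt_succ hσ fun j hj => lt_of_le_of_ne (h1 j hj) ?_
  exact σ.injective.ne (Nat.succ_ne_self j).symm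

def IsReducedWord (n : ℕ) (w : List ℕ) : Prop :=
  IsWord n w ∧ w.length = invNum n (wordEval w)

lemma exists_isReducedWord {n : ℕ} {σ : Perm ℕ} (hσ : σ ∈ permsOfIcc n) :
    ∃ w, IsReducedWord n w ∧ wordEval w = σ := by
  induction hk : invNum n σ generalizing σ with
  | zero =>
    refine ⟨[], ⟨fun _ h => absurd h List.not_mem_nil, by simp [wordEval, invNum_one]⟩, ?_⟩
    by_contra h1
    obtain ⟨j, hj, hdesc⟩ := exists_descent hσ (Ne.symm h1)
    have := invNum_mul_swap_add_one hj hdesc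
    omega
  | succ k ih =>
    obtain ⟨j, hj, hdesc⟩ := exists_descent hσ (by rintro rfl; simp [invNum_one] at hk)
    have hinv := invNum_mul_swap_add_one hj hdesc
    obtain ⟨w, ⟨hw, hlen⟩, heval⟩ :=
      ih (mul_mem hσ (swap_mem_permsOfIcc hj)) (by omega)
    refine ⟨j :: w, ⟨?_, ?_⟩, ?_⟩
    · exact fun i hi => (List.mem_cons.1 hi).elim (· ▸ hj) (hw i)
    · rw [heval] at hlen
      simp only [List.length_cons, wordEval, heval, mul_swap_mul_self]; omega
    · simp only [wordEval, heval, mul_swap_mul_self]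

lemma IsReducedWord.of_minimal {n : ℕ} {u : List ℕ} (hu : IsWord n u)
    (hmin : ∀ w, IsWord n w → wordEval w = wordEval u → u.length ≤ w.length) :
    IsReducedWord n u := by
  obtain ⟨w, ⟨hw, hlen⟩, heval⟩ := exists_isReducedWord (wordEval_mem_permsOfIcc hu)
  have := hmin w hw heval
  have := invNum_wordEval_le_length hu
  exact ⟨hu, by rw [heval] at hlen; omega⟩

lemma IsReducedWord.length_eq {n : ℕ} {u v : List ℕ} (hu : IsReducedWord n u)
    (hv : IsReducedWord n v) (huv : wordEval u = wordEval v) : u.length = v.length := by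
  rw [hu.2, hv.2, huv]

lemma IsReducedWord.eq_nil {n : ℕ} {w : List ℕ} (hw : IsReducedWord n w)
    (h1 : wordEval w = 1) : w = [] := by
  have := hw.2
  rw [h1, invNum_one] at this
  exact List.eq_nil_of_length_eq_zero this

lemma IsReducedWord.descent {n a : ℕ} {w : List ℕ} (hw : IsReducedWord n (a :: w)) :
    wordEval (a :: w) (a + 1) < wordEval (a :: w) a := by
  have ha := hw.1 a List.mem_cons_self
  have hle := invNum_wordEval_le_length fun j hj => hw.1 j (List.mem_cons_of_mem a hj)
  have hlen := hw.2
  rcases lt_or_gt_of_ne ((wordEval (a :: w)).injective.ne (Nat.succ_ne_self a).symm) with h | h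
  · have := invNum_mul_swap_of_lt ha h
    simp only [wordEval, mul_swap_mul_self, List.length_cons] at this hlen
    omega
  · exact h

lemma IsReducedWord.of_cons {n a : ℕ} {w : List ℕ} (hw : IsReducedWord n (a :: w)) :
    IsReducedWord n w := by
  have := invNum_mul_swap_add_one (hw.1 a List.mem_cons_self) hw.descent
  have hlen := hw.2
  simp only [wordEval, mul_swap_mul_self, List.length_cons] at this hlen
  exact ⟨fun j hj => hw.1 j (List.mem_cons_of_mem a hj), by omega⟩

lemma exists_isReducedWord_append {n : ℕ} {τ : Perm ℕ} (hτ : τ ∈ permsOfIcc n) {p : List ℕ}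
    (hp : IsWord n p) (hinv : invNum n τ + p.length = invNum n (τ * wordEval p)) :
    ∃ w, IsReducedWord n (p ++ w) ∧ wordEval (p ++ w) = τ * wordEval p := by
  obtain ⟨w, ⟨hw, hlen⟩, heval⟩ := exists_isReducedWord hτ
  refine ⟨w, ⟨?_, ?_⟩, ?_⟩
  · intro j hj
    exact (List.mem_append.1 hj).elim (hp j) (hw j)
  · rw [heval] at hlen
    rw [List.length_append, wordEval_append, heval]; omega
  · rw [wordEval_append, heval]

lemma swap_mul_swap_comm {a b : ℕ} (h : a + 2 ≤ b ∨ b + 2 ≤ a) :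
    swap a (a + 1) * swap b (b + 1) = swap b (b + 1) * swap a (a + 1) := by
  ext x
  simp only [Perm.mul_apply, swap_apply_def]
  split_ifs <;> omega

lemma swap_mul_swap_mul_swap_succ (a : ℕ) :
    swap a (a + 1) * swap (a + 1) (a + 1 + 1) * swap a (a + 1) =
      swap (a + 1) (a + 1 + 1) * swap a (a + 1) * swap (a + 1) (a + 1 + 1) := by
  ext x
  simp only [Perm.mul_apply, swap_apply_def]
  split_ifs <;> omega

lemma exists_braidCongr_of_prefix {n : ℕ} {σ τ : Perm ℕ} (hτ : τ ∈ permsOfIcc n)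
    {a b : ℕ} {p q : List ℕ} (hp : IsWord n (a :: p)) (hq : IsWord n (b :: q))
    (hpq : BraidCongr n (a :: p) (b :: q)) (heval : wordEval (a :: p) = wordEval (b :: q))
    (hlen : p.length = q.length) (hσ : τ * wordEval (a :: p) = σ)
    (hinv : invNum n τ + (p.length + 1) = invNum n σ) :
    ∃ x y, IsReducedWord n (a :: x) ∧ IsReducedWord n (b :: y) ∧
      wordEval (a :: x) = σ ∧ wordEval (b :: y) = σ ∧ BraidCongr n (a :: x) (b :: y) := by
  subst hσ
  obtain ⟨w, ⟨hw, hwlen⟩, hweval⟩ := exists_isReducedWord_append hτ hp hinv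
  have hqw : wordEval ((b :: q) ++ w) = τ * wordEval (a :: p) := by
    rw [wordEval_append, ← heval, ← wordEval_append, hweval]
  refine ⟨p ++ w, q ++ w, ⟨hw, hwlen⟩, ⟨?_, ?_⟩, hweval, hqw, hpq.append (.refl w)⟩
  · intro j hj
    exact (List.mem_append.1 hj).elim (hq j) fun hj => hw j (List.mem_append_right _ hj)
  · rw [← List.cons_append, hqw, ← hweval, ← hwlen]
    simp [hlen]

lemma exists_braidCongr_of_far_descents {n : ℕ} {σ : Perm ℕ} (hσ : σ ∈ permsOfIcc n) {a b : ℕ}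
    (ha : a ∈ Finset.Icc 1 (n - 1)) (hb : b ∈ Finset.Icc 1 (n - 1)) (hab : a + 2 ≤ b ∨ b + 2 ≤ a)
    (hda : σ (a + 1) < σ a) (hdb : σ (b + 1) < σ b) :
    ∃ x y, IsReducedWord n (a :: x) ∧ IsReducedWord n (b :: y) ∧
      wordEval (a :: x) = σ ∧ wordEval (b :: y) = σ ∧ BraidCongr n (a :: x) (b :: y) := by
  have hdb' : (σ * swap a (a + 1)) (b + 1) < (σ * swap a (a + 1)) b := by
    rwa [Perm.mul_apply, Perm.mul_apply, swap_apply_of_ne_of_ne (by omega) (by omega),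
      swap_apply_of_ne_of_ne (by omega) (by omega)]
  have h1 := invNum_mul_swap_add_one ha hda
  have h2 := invNum_mul_swap_add_one hb hdb'
  refine exists_braidCongr_of_prefix (mul_mem (mul_mem hσ (swap_mem_permsOfIcc ha))
    (swap_mem_permsOfIcc hb)) (p := [b]) (q := [a]) ?_ ?_ (.comm a b ha hb hab) ?_ rfl ?_ ?_
  · simp only [IsWord, List.forall_mem_cons]
    exact ⟨ha, hb, List.forall_mem_nil _⟩
  · simp only [IsWord, List.forall_mem_cons]
    exact ⟨hb, ha, List.forall_mem_nil _⟩
  · simp only [wordEval, one_mul]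
    exact (swap_mul_swap_comm hab).symm
  · simp only [wordEval, one_mul, ← mul_assoc, mul_swap_mul_self]
  · simp only [List.length_singleton]
    omega

lemma exists_braidCongr_of_adjacent_descents {n : ℕ} {σ : Perm ℕ} (hσ : σ ∈ permsOfIcc n)
    {a : ℕ} (ha : a ∈ Finset.Icc 1 (n - 1)) (ha' : a + 1 ∈ Finset.Icc 1 (n - 1))
    (hda : σ (a + 1) < σ a) (hda' : σ (a + 1 + 1) < σ (a + 1)) :
    ∃ x y, IsReducedWord n (a :: x) ∧ IsReducedWord n ((a + 1) :: y) ∧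
      wordEval (a :: x) = σ ∧ wordEval ((a + 1) :: y) = σ ∧
      BraidCongr n (a :: x) ((a + 1) :: y) := by
  have e₁ : swap a (a + 1) (a + 1 + 1) = a + 1 + 1 := swap_apply_of_ne_of_ne (by omega) (by omega)
  have e₂ : swap (a + 1) (a + 1 + 1) a = a := swap_apply_of_ne_of_ne (by omega) (by omega)
  have hd₁ : (σ * swap a (a + 1)) (a + 1 + 1) < (σ * swap a (a + 1)) (a + 1) := by
    simp only [Perm.mul_apply, swap_apply_right, e₁]
    omega
  have hd₂ : (σ * swap a (a + 1) * swap (a + 1) (a + 1 + 1)) (a + 1) <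
      (σ * swap a (a + 1) * swap (a + 1) (a + 1 + 1)) a := by
    simpa only [Perm.mul_apply, swap_apply_left, e₁, e₂] using hda'
  have h1 := invNum_mul_swap_add_one ha hda
  have h2 := invNum_mul_swap_add_one ha' hd₁
  have h3 := invNum_mul_swap_add_one ha hd₂
  have hbraid : BraidCongr n [a, a + 1, a] [a + 1, a, a + 1] :=
    .braid a (Finset.mem_Icc.1 ha).1 (by simp only [Finset.mem_Icc] at ha'; omega)
  refine exists_braidCongr_of_prefix (mul_mem (mul_mem (mul_mem hσ (swap_mem_permsOfIcc ha))
    (swap_mem_permsOfIcc ha')) (swap_mem_permsOfIcc ha)) (p := [a + 1, a]) (q := [a, a + 1])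
    ?_ ?_ hbraid ?_ rfl ?_ ?_
  · simp only [IsWord, List.forall_mem_cons]
    exact ⟨ha, ha', ha, List.forall_mem_nil _⟩
  · simp only [IsWord, List.forall_mem_cons]
    exact ⟨ha', ha, ha', List.forall_mem_nil _⟩
  · simp only [wordEval, one_mul]
    exact swap_mul_swap_mul_swap_succ a
  · simp only [wordEval, one_mul, ← mul_assoc, mul_swap_mul_self]
  · simp only [List.length_cons, List.length_nil]
    omega

lemma exists_braidCongr_of_descents {n : ℕ} {σ : Perm ℕ} (hσ : σ ∈ permsOfIcc n) {a b : ℕ}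
    (ha : a ∈ Finset.Icc 1 (n - 1)) (hb : b ∈ Finset.Icc 1 (n - 1)) (hab : a ≠ b)
    (hda : σ (a + 1) < σ a) (hdb : σ (b + 1) < σ b) :
    ∃ x y, IsReducedWord n (a :: x) ∧ IsReducedWord n (b :: y) ∧
      wordEval (a :: x) = σ ∧ wordEval (b :: y) = σ ∧ BraidCongr n (a :: x) (b :: y) := by
  rcases (by omega : b = a + 1 ∨ a = b + 1 ∨ a + 2 ≤ b ∨ b + 2 ≤ a) with rfl | rfl | hfar
  · exact exists_braidCongr_of_adjacent_descents hσ ha hb hda hdb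
  · obtain ⟨y, x, hy, hx, hyσ, hxσ, hyx⟩ := exists_braidCongr_of_adjacent_descents hσ hb ha hdb hda
    exact ⟨x, y, hx, hy, hxσ, hyσ, hyx.symm⟩
  · exact exists_braidCongr_of_far_descents hσ ha hb hfar hda hdb

theorem BraidCongr.of_isReducedWord {n : ℕ} {u v : List ℕ} (hu : IsReducedWord n u)
    (hv : IsReducedWord n v) (huv : wordEval u = wordEval v) : BraidCongr n u v := by
  induction hk : u.length generalizing u v with
  | zero =>
    obtain rfl := List.eq_nil_of_length_eq_zero hk
    rw [hv.eq_nil huv.symm]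
    exact .refl []
  | succ k ih =>
    obtain _ | ⟨a, u⟩ := u
    · simp at hk
    obtain _ | ⟨b, v⟩ := v
    · simpa using hu.length_eq hv huv
    have hlen : u.length = k := by simpa using hk
    have same_head {c : ℕ} {t t' : List ℕ} (ht : IsReducedWord n (c :: t))
        (ht' : IsReducedWord n (c :: t')) (h : wordEval (c :: t) = wordEval (c :: t'))
        (hl : t.length = k) : BraidCongr n (c :: t) (c :: t') :=
      (BraidCongr.refl [c]).append (ih ht.of_cons ht'.of_cons (mul_right_cancel h) hl)
    by_cases hab : a = b
    · subst hab
      exact same_head hu hv huv hlen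
    obtain ⟨x, y, hx, hy, hxσ, hyσ, hxy⟩ := exists_braidCongr_of_descents
      (wordEval_mem_permsOfIcc hu.1) (hu.1 a List.mem_cons_self) (hv.1 b List.mem_cons_self) hab
      hu.descent (huv ▸ hv.descent)
    have hyv : BraidCongr n (b :: y) (b :: v) := by
      refine same_head hy hv (hyσ.trans huv) ?_
      have := hy.length_eq hu hyσ
      simp only [List.length_cons] at this
      omega
    exact (same_head hu hx hxσ.symm hlen).trans (hxy.trans hyv)

theorem stmt11_general (n : ℕ) (u v : List ℕ)
    (hu : ∀ j ∈ u, j ∈ Finset.Icc 1 (n - 1))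
    (hv : ∀ j ∈ v, j ∈ Finset.Icc 1 (n - 1))
    (huv : wordEval u = wordEval v)
    (hminu : ∀ w : List ℕ, (∀ j ∈ w, j ∈ Finset.Icc 1 (n - 1)) →
      wordEval w = wordEval u → u.length ≤ w.length)
    (hminv : ∀ w : List ℕ, (∀ j ∈ w, j ∈ Finset.Icc 1 (n - 1)) →
      wordEval w = wordEval v → v.length ≤ w.length) :
    BraidCongr n u v :=
  BraidCongr.of_isReducedWord (.of_minimal hu hminu) (.of_minimal hv hminv) huv

/-- if `u` and `v` are two words over `{T_1,…,T_{n-1}}` that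
evaluate to the same permutation of `{1,…,n}` and both have minimal length
among all words with that evaluation, then `u ≡ v` for the congruence
generated by the braid and commutation relations. -/
theorem stmt11 (n : ℕ) (hn : 1 ≤ n) (u v : List ℕ)
    (hu : ∀ j ∈ u, j ∈ Finset.Icc 1 (n - 1))
    (hv : ∀ j ∈ v, j ∈ Finset.Icc 1 (n - 1))
    (huv : wordEval u = wordEval v)
    (hminu : ∀ w : List ℕ, (∀ j ∈ w, j ∈ Finset.Icc 1 (n - 1)) →
      wordEval w = wordEval u → u.length ≤ w.length)
    (hminv : ∀ w : List ℕ, (∀ j ∈ w, j ∈ Finset.Icc 1 (n - 1)) →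
      wordEval w = wordEval v → v.length ≤ w.length) :
    BraidCongr n u v :=
  stmt11_general n u v hu hv huv hminu hminv
end
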